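/- Lemma (Model 4 exchange coefficients under mutation substitution): In F, with Y₁'' = (x₆⁴+x₁x₂x₃x₆+2x₄x₅x₆²+x₄²x₅²)/(x₁x₃x₄), Y₃'' = (x₄x₅+x₆²)/x₃ and Y₄'' = (x₁x₂x₃+x₄x₅x₆+x₆³)/(x₃x₄), the following five identities hold: (Y₃''x₅+Y₄''x₆)/(Y₁''x₂) = x₁/x₂; (Y₁''x₆+x₂x₅)/(Y₃''Y₄'') = x₃/x₁; (Y₁''Y₃''+x₂Y₄'')/(x₅x₆) = (x₆⁶+2x₁x₂x₃x₆³+x₁²x₂²x₃²+3x₄x₅x₆⁴+2x₁x₂x₃x₄x₅x₆+3x₄²x₅²x₆²+x₄³x₅³)/(x₁x₃²x₄x₅x₆); (Y₁''Y₃''x₆+x₂Y₃''x₅+x₂Y₄''x₆)/(Y₁''Y₄''x₅) = x₄/x₅; and (x₂Y₄''x₅+Y₁''Y₃''x₅+Y₁''Y₄''x₆)/(x₂Y₃''x₆) = (x₆⁶+2x₁x₂x₃x₆³+x₁²x₂²x₃²+3x₄x₅x₆⁴+3x₁x₂x₃x₄x₅x₆+3x₄²x₅²x₆²+x₄³x₅³)/(x₁x₂x₃x₄²x₆).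 (These say that substituting x₁ ↦ Y₁'', x₃ ↦ Y₃'', x₄ ↦ Y₄'' into the five Model 1 coefficients A, B, C, D, E of Theorem 3.1 produces the five Model 4 coefficients of Theorem 3.4.) -/

import Mathlib

noncomputable section

open MvPolynomial

abbrev F : Type := FractionRing (MvPolynomial (Fin 6) ℚ)

/-- The images of the six indeterminates in the field `F = ℚ(x₁,…,x₆)`. -/
def xv (t : Fin 6) : F := algebraMap (MvPolynomial (Fin 6) ℚ) F (X t)

def x1 : F := xv 0
def x2 : F := xv 1
def x3 : F := xv 2
def x4 : F := xv 3
def x5 : F := xv 4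
def x6 : F := xv 5

/-- Chooses among six field elements according to the residue of `2(i-j)+3k` mod 6:
residues 5,2,4,1,3,0 select the 1st,…,6th element respectively. -/
def pick (v1 v2 v3 v4 v5 v6 : F) (i j k : ℤ) : F :=
  if (2*(i-j)+3*k) % 6 = 5 then v1
  else if (2*(i-j)+3*k) % 6 = 2 then v2
  else if (2*(i-j)+3*k) % 6 = 4 then v3
  else if (2*(i-j)+3*k) % 6 = 1 then v4
  else if (2*(i-j)+3*k) % 6 = 3 then v5
  else v6

/-- α(i,j,k) = ⌊(P+i+2j)/3⌋ with P = i²+ij+j²+1. -/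
def expA (i j : ℤ) : ℤ := Int.fdiv ((i^2+i*j+j^2+1) + i + 2*j) 3
/-- β(i,j,k) = ⌊(P+2i+j)/3⌋. -/
def expB (i j : ℤ) : ℤ := Int.fdiv ((i^2+i*j+j^2+1) + 2*i + j) 3
/-- γ(i,j,k) = ⌊P/3⌋. -/
def expC (i j : ℤ) : ℤ := Int.fdiv (i^2+i*j+j^2+1) 3
/-- δ(i,j,k) = ⌊(k−1)²/4⌋. -/
def expD (k : ℤ) : ℤ := Int.fdiv ((k-1)^2) 4
/-- ε(i,j,k) = ⌊k²/4⌋. -/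
def expE (k : ℤ) : ℤ := Int.fdiv (k^2) 4

def Y1'' : F := (x6^4 + x1*x2*x3*x6 + 2*x4*x5*x6^2 + x4^2*x5^2) / (x1*x3*x4)
def Y3'' : F := (x4*x5 + x6^2) / x3
def Y4'' : F := (x1*x2*x3 + x4*x5*x6 + x6^3) / (x3*x4)

/-!
Mutating the Model 4 seed at 3, 4 and then 1 gives the exchange relations
`x₃Y₃'' = x₄x₅ + x₆²`, `x₄Y₄'' = x₁x₂ + x₆Y₃''` and `x₁Y₁'' = x₅Y₃'' + x₆Y₄''`.
Each of the five identities is a polynomial consequence of these relations once the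
denominators are cleared; the denominators do not vanish because `x₄x₅ + x₆²`,
`x₁x₂x₃ + x₄x₅x₆ + x₆³` and the numerator of `Y₁''` are nonzero polynomials
(they are positive at `x = (1, …, 1)`).
-/

structure ExchangeRelations {K : Type*} [Field K] (x1 x2 x3 x4 x5 x6 y1 y3 y4 : K) : Prop where
  exchange3 : x3 * y3 = x4 * x5 + x6 ^ 2
  exchange4 : x4 * y4 = x1 * x2 + x6 * y3
  exchange1 : x1 * y1 = x5 * y3 + x6 * y4

namespace ExchangeRelations

variable {K : Type*} [Field K] {x1 x2 x3 x4 x5 x6 y1 y3 y4 : K}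

theorem x3_mul_x4_mul_y4 (h : ExchangeRelations x1 x2 x3 x4 x5 x6 y1 y3 y4) :
    x3 * x4 * y4 = x1 * x2 * x3 + x4 * x5 * x6 + x6 ^ 3 := by
  linear_combination x3 * h.exchange4 + x6 * h.exchange3

theorem x1_mul_x3_mul_x4_mul_y1 (h : ExchangeRelations x1 x2 x3 x4 x5 x6 y1 y3 y4) :
    x1 * x3 * x4 * y1 = x6 ^ 4 + x1 * x2 * x3 * x6 + 2 * x4 * x5 * x6 ^ 2 + x4 ^ 2 * x5 ^ 2 := by
  linear_combination x3 * x4 * h.exchange1 + x6 * h.x3_mul_x4_mul_y4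
    + x4 * x5 * h.exchange3

theorem coeffA (h : ExchangeRelations x1 x2 x3 x4 x5 x6 y1 y3 y4) (hx2 : x2 ≠ 0) (hy1 : y1 ≠ 0) :
    (y3 * x5 + y4 * x6) / (y1 * x2) = x1 / x2 := by
  rw [div_eq_div_iff (mul_ne_zero hy1 hx2) hx2]
  linear_combination (-x2) * h.exchange1

theorem coeffB (h : ExchangeRelations x1 x2 x3 x4 x5 x6 y1 y3 y4) (hx1 : x1 ≠ 0) (hy3 : y3 ≠ 0)
    (hy4 : y4 ≠ 0) :
    (y1 * x6 + x2 * x5) / (y3 * y4) = x3 / x1 := by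
  rw [div_eq_div_iff (mul_ne_zero hy3 hy4) hx1]
  linear_combination x6 * h.exchange1 - y4 * h.exchange3 - x5 * h.exchange4

theorem coeffC (h : ExchangeRelations x1 x2 x3 x4 x5 x6 y1 y3 y4) (hx1 : x1 ≠ 0) (hx3 : x3 ≠ 0)
    (hx4 : x4 ≠ 0) (hx5 : x5 ≠ 0) (hx6 : x6 ≠ 0) :
    (y1 * y3 + x2 * y4) / (x5 * x6) =
      (x6^6 + 2*x1*x2*x3*x6^3 + x1^2*x2^2*x3^2 + 3*x4*x5*x6^4
        + 2*x1*x2*x3*x4*x5*x6 + 3*x4^2*x5^2*x6^2 + x4^3*x5^3) / (x1*x3^2*x4*x5*x6) := by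
  rw [div_eq_div_iff (by positivity) (by positivity)]
  -- The numerator on the right is `N₁N₃ + x₁x₂x₃N₄`, where `N₁ = x₁x₃x₄y₁`, `N₃ = x₃y₃` and
  -- `N₄ = x₃x₄y₄` are the numerators of `Y₁''`, `Y₃''`, `Y₄''`.
  linear_combination x5 * x6 * (x3 * y3 * h.x1_mul_x3_mul_x4_mul_y1
    + (x6 ^ 4 + x1 * x2 * x3 * x6 + 2 * x4 * x5 * x6 ^ 2 + x4 ^ 2 * x5 ^ 2) * h.exchange3
    + x1 * x2 * x3 * h.x3_mul_x4_mul_y4)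

theorem coeffD (h : ExchangeRelations x1 x2 x3 x4 x5 x6 y1 y3 y4) (hx5 : x5 ≠ 0) (hy1 : y1 ≠ 0)
    (hy4 : y4 ≠ 0) :
    (y1 * y3 * x6 + x2 * y3 * x5 + x2 * y4 * x6) / (y1 * y4 * x5) = x4 / x5 := by
  rw [div_eq_div_iff (by positivity) hx5]
  linear_combination -x5 * x2 * h.exchange1 - x5 * y1 * h.exchange4

theorem coeffE (h : ExchangeRelations x1 x2 x3 x4 x5 x6 y1 y3 y4) (hx1 : x1 ≠ 0) (hx2 : x2 ≠ 0)
    (hx3 : x3 ≠ 0) (hx4 : x4 ≠ 0) (hx6 : x6 ≠ 0) (hy3 : y3 ≠ 0) :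
    (x2 * y4 * x5 + y1 * y3 * x5 + y1 * y4 * x6) / (x2 * y3 * x6) =
      (x6^6 + 2*x1*x2*x3*x6^3 + x1^2*x2^2*x3^2 + 3*x4*x5*x6^4
        + 3*x1*x2*x3*x4*x5*x6 + 3*x4^2*x5^2*x6^2 + x4^3*x5^3) / (x1*x2*x3*x4^2*x6) := by
  rw [div_eq_div_iff (by positivity) (by positivity)]
  -- `y3` occurs undivided on the right, so the identity only holds after multiplying by `x3`;
  -- then it reads `x₁x₂x₃x₄x₅N₄ + x₄x₅N₁N₃ + x₆N₁N₄ = N₃ · (numerator on the right)`, with the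
  -- `Nᵢ` as in `coeffC`.
  refine mul_left_cancel₀ hx3 ?_
  linear_combination x2 * x6 * (x1 * x2 * x3 * x4 * x5 * h.x3_mul_x4_mul_y4
    + x4 * x5 * (x3 * y3 * h.x1_mul_x3_mul_x4_mul_y1
      + (x6 ^ 4 + x1 * x2 * x3 * x6 + 2 * x4 * x5 * x6 ^ 2 + x4 ^ 2 * x5 ^ 2) * h.exchange3)
    + x6 * (x3 * x4 * y4 * h.x1_mul_x3_mul_x4_mul_y1
      + (x6 ^ 4 + x1 * x2 * x3 * x6 + 2 * x4 * x5 * x6 ^ 2 + x4 ^ 2 * x5 ^ 2) * h.x3_mul_x4_mul_y4)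
    - (x6^6 + 2*x1*x2*x3*x6^3 + x1^2*x2^2*x3^2 + 3*x4*x5*x6^4
        + 3*x1*x2*x3*x4*x5*x6 + 3*x4^2*x5^2*x6^2 + x4^3*x5^3) * h.exchange3)

end ExchangeRelations

theorem xv_ne_zero (t : Fin 6) : xv t ≠ 0 :=
  (map_ne_zero_iff _ (IsFractionRing.injective _ _)).mpr (X_ne_zero t)

theorem algebraMap_ne_zero_of_eval_ne_zero {σ R K : Type*} [CommRing R] [CommRing K]
    [Algebra (MvPolynomial σ R) K] [IsFractionRing (MvPolynomial σ R) K] {p : MvPolynomial σ R}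
    (v : σ → R) (h : eval v p ≠ 0) : algebraMap (MvPolynomial σ R) K p ≠ 0 :=
  (map_ne_zero_iff _ (IsFractionRing.injective _ _)).mpr (ne_of_apply_ne (eval v) (by simpa))

theorem Y3''_numerator_ne_zero : x4*x5 + x6^2 ≠ 0 := by
  have : x4*x5 + x6^2 = algebraMap (MvPolynomial (Fin 6) ℚ) F (X 3 * X 4 + X 5 ^ 2) := by
    simp [x4, x5, x6, xv]
  rw [this]
  exact algebraMap_ne_zero_of_eval_ne_zero (fun _ => 1) (by norm_num)

theorem Y4''_numerator_ne_zero : x1*x2*x3 + x4*x5*x6 + x6^3 ≠ 0 := by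
  have : x1*x2*x3 + x4*x5*x6 + x6^3 =
      algebraMap (MvPolynomial (Fin 6) ℚ) F (X 0 * X 1 * X 2 + X 3 * X 4 * X 5 + X 5 ^ 3) := by
    simp [x1, x2, x3, x4, x5, x6, xv]
  rw [this]
  exact algebraMap_ne_zero_of_eval_ne_zero (fun _ => 1) (by norm_num)

theorem Y1''_numerator_ne_zero : x6^4 + x1*x2*x3*x6 + 2*x4*x5*x6^2 + x4^2*x5^2 ≠ 0 := by
  have : x6^4 + x1*x2*x3*x6 + 2*x4*x5*x6^2 + x4^2*x5^2 =
      algebraMap (MvPolynomial (Fin 6) ℚ) F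
        (X 5 ^ 4 + X 0 * X 1 * X 2 * X 5 + 2 * X 3 * X 4 * X 5 ^ 2 + X 3 ^ 2 * X 4 ^ 2) := by
    simp [x1, x2, x3, x4, x5, x6, xv, map_ofNat]
  rw [this]
  exact algebraMap_ne_zero_of_eval_ne_zero (fun _ => 1) (by norm_num)

theorem Y1''_ne_zero : Y1'' ≠ 0 :=
  div_ne_zero Y1''_numerator_ne_zero (by simp [x1, x3, x4, xv_ne_zero])

theorem Y3''_ne_zero : Y3'' ≠ 0 :=
  div_ne_zero Y3''_numerator_ne_zero (xv_ne_zero 2)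

theorem Y4''_ne_zero : Y4'' ≠ 0 :=
  div_ne_zero Y4''_numerator_ne_zero (by simp [x3, x4, xv_ne_zero])

theorem exchangeRelations_Y'' : ExchangeRelations x1 x2 x3 x4 x5 x6 Y1'' Y3'' Y4'' := by
  have hx1 : x1 ≠ 0 := xv_ne_zero 0
  have hx3 : x3 ≠ 0 := xv_ne_zero 2
  have hx4 : x4 ≠ 0 := xv_ne_zero 3
  constructor
  · simp only [Y3'']; field_simp
  · simp only [Y3'', Y4'']; field_simp; ring
  · simp only [Y1'', Y3'', Y4'']; field_simp; ring

/-- Lemma: Model 4 exchange coefficients under the mutation substitution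
x₁ ↦ Y₁'', x₃ ↦ Y₃'', x₄ ↦ Y₄''. -/
theorem model4_coefficients_substitution :
    (Y3''*x5 + Y4''*x6) / (Y1''*x2) = x1 / x2 ∧
    (Y1''*x6 + x2*x5) / (Y3''*Y4'') = x3 / x1 ∧
    (Y1''*Y3'' + x2*Y4'') / (x5*x6) =
      (x6^6 + 2*x1*x2*x3*x6^3 + x1^2*x2^2*x3^2 + 3*x4*x5*x6^4
        + 2*x1*x2*x3*x4*x5*x6 + 3*x4^2*x5^2*x6^2 + x4^3*x5^3) / (x1*x3^2*x4*x5*x6) ∧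
    (Y1''*Y3''*x6 + x2*Y3''*x5 + x2*Y4''*x6) / (Y1''*Y4''*x5) = x4 / x5 ∧
    (x2*Y4''*x5 + Y1''*Y3''*x5 + Y1''*Y4''*x6) / (x2*Y3''*x6) =
      (x6^6 + 2*x1*x2*x3*x6^3 + x1^2*x2^2*x3^2 + 3*x4*x5*x6^4
        + 3*x1*x2*x3*x4*x5*x6 + 3*x4^2*x5^2*x6^2 + x4^3*x5^3) / (x1*x2*x3*x4^2*x6) := by
  have h := exchangeRelations_Y''
  have hx := xv_ne_zero
  exact ⟨h.coeffA (hx 1) Y1''_ne_zero,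
    h.coeffB (hx 0) Y3''_ne_zero Y4''_ne_zero,
    h.coeffC (hx 0) (hx 2) (hx 3) (hx 4) (hx 5),
    h.coeffD (hx 4) Y1''_ne_zero Y4''_ne_zero,
    h.coeffE (hx 0) (hx 1) (hx 2) (hx 3) (hx 5) Y3''_ne_zero⟩
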